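/- arXiv:2603.00645 — 3 statements merged into one kernel-verified Lean document; each statement's English description precedes it below -/
import Mathlib

section
/- Let φ: (0,∞) → (0,∞) be twice continuously differentiable, with t ↦ φ(t)/t^{p₊} almost decreasing with constant β ≥ 1 for some p₊ > 1, and suppose φ''(z) ≥ c₇ z⁻² φ(z) for all z > 0 with some constant c₇ > 0. Then φ is uniformly convex in the following sense: for every ε > 0 there exists δ ∈ (0,1) (one may take δ = c₇ ε² / (2^{p₊+5} β)) such that φ((s+t)/2) ≤ (1−δ)(φ(s)+φ(t))/2 for all s, t > 0 with |s−t| ≥ ε max{s,t}. -/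
open Real Set

set_option maxHeartbeats 1000000 in
theorem stmt_6 (φ φ' φ'' : ℝ → ℝ) (pp β c₇ : ℝ)
    (hpp : 1 < pp) (hβ : 1 ≤ β) (hc₇ : 0 < c₇)
    (hpos : ∀ z : ℝ, 0 < z → 0 < φ z)
    (hd1 : ∀ z : ℝ, 0 < z → HasDerivAt φ (φ' z) z)
    (hd2 : ∀ z : ℝ, 0 < z → HasDerivAt φ' (φ'' z) z)
    (hcont : ContinuousOn φ'' (Set.Ioi (0:ℝ)))
    (hdec : ∀ s t : ℝ, 0 < s → s ≤ t → φ t / t ^ pp ≤ β * (φ s / s ^ pp))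
    (hsec : ∀ z : ℝ, 0 < z → c₇ * (φ z / z ^ 2) ≤ φ'' z) :
    ∀ ε : ℝ, 0 < ε → ∃ δ ∈ Set.Ioo (0:ℝ) 1,
      ∀ s t : ℝ, 0 < s → 0 < t → ε * max s t ≤ |s - t| →
        φ ((s + t) / 2) ≤ (1 - δ) * (φ s + φ t) / 2 := by
  intro ε hε
  have hβ0 : (0:ℝ) < β := lt_of_lt_of_le one_pos hβ
  set ε' : ℝ := min ε (1/2) with hε'def
  have hε'0 : 0 < ε' := lt_min hε (by norm_num)
  have hε'ε : ε' ≤ ε := min_le_left _ _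
  have hε'half : ε' ≤ 1/2 := min_le_right _ _
  set P : ℝ := (2:ℝ) ^ pp with hPdef
  have hP : 0 < P := Real.rpow_pos_of_pos (by norm_num) pp
  set δ₀ : ℝ := c₇ * ε' ^ 2 / (64 * P * β) with hδ₀def
  have hδ₀ : 0 < δ₀ := by
    rw [hδ₀def]
    exact div_pos (mul_pos hc₇ (pow_pos hε'0 2))
      (mul_pos (mul_pos (by norm_num) hP) hβ0)
  clear_value ε' P δ₀
  refine ⟨min δ₀ (1/2), ⟨lt_min hδ₀ (by norm_num),
    lt_of_le_of_lt (min_le_right _ _) (by norm_num)⟩, ?_⟩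
  -- φ' is strictly monotone on (0,∞)
  have hmono : StrictMonoOn φ' (Ioi 0) := by
    apply strictMonoOn_of_deriv_pos (convex_Ioi 0)
    · exact fun x hx => (hd2 x hx).continuousAt.continuousWithinAt
    · intro x hx
      rw [interior_Ioi] at hx
      rw [(hd2 x hx).deriv]
      have h1 := hsec x hx
      have h2 : 0 < c₇ * (φ x / x ^ 2) :=
        mul_pos hc₇ (div_pos (hpos x hx) (pow_pos hx 2))
      linarith
  have contφ : ∀ a b : ℝ, 0 < a → ContinuousOn φ (Icc a b) := by
    intro a b ha x hx
    exact ((hd1 x (lt_of_lt_of_le ha hx.1)).continuousAt).continuousWithinAt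
  have contφ' : ∀ a b : ℝ, 0 < a → ContinuousOn φ' (Icc a b) := by
    intro a b ha x hx
    exact ((hd2 x (lt_of_lt_of_le ha hx.1)).continuousAt).continuousWithinAt
  -- key claim for s < t
  have key : ∀ s t : ℝ, 0 < s → 0 < t → s < t → ε * t ≤ t - s →
      φ ((s + t) / 2) ≤ (1 - min δ₀ (1/2)) * (φ s + φ t) / 2 := by
    intro s t hs ht hst hεt
    set m : ℝ := (s + t) / 2 with hm
    set H : ℝ := (t - s) / 2 with hH
    have hm0 : 0 < m := by rw [hm]; linarith
    have hH0 : 0 < H := by rw [hH]; linarith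
    have hsm : s < m := by rw [hm]; linarith
    have hmt : m < t := by rw [hm]; linarith
    have hHm : ε' * m / 2 ≤ H := by
      have h1 : ε' * t ≤ ε * t := mul_le_mul_of_nonneg_right hε'ε ht.le
      have h3 : ε' * m ≤ ε' * t := mul_le_mul_of_nonneg_left hmt.le hε'0.le
      rw [hH]; linarith
    have hmH : m - H = s := by rw [hm, hH]; ring
    have htmH : t - m = H := by rw [hm, hH]; ring
    clear_value m H
    set h₀ : ℝ := min H m / 2 with hh₀def
    have hh₀0 : 0 < h₀ := by
      have : 0 < min H m := lt_min hH0 hm0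
      rw [hh₀def]; linarith
    have hh₀H : h₀ ≤ H / 2 := by
      have : min H m ≤ H := min_le_left _ _
      rw [hh₀def]; linarith
    have hh₀m : h₀ ≤ m / 2 := by
      have : min H m ≤ m := min_le_right _ _
      rw [hh₀def]; linarith
    have hh₀low : ε' * m / 4 ≤ h₀ := by
      have h1 : ε' * m / 2 ≤ m := by
        have := mul_le_mul_of_nonneg_right hε'half hm0.le
        linarith
      have h2 : ε' * m / 2 ≤ min H m := le_min hHm h1
      rw [hh₀def]; linarith
    clear_value h₀
    have p1 : s < m - h₀ := by
      have : h₀ < H := lt_of_le_of_lt hh₀H (by linarith)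
      linarith [hmH]
    have p2 : m - h₀ < m := by linarith
    have hmh₀pos : 0 < m - h₀ := by linarith
    -- MVT on (m, t)
    obtain ⟨ξ₂, hξ₂, hA⟩ := exists_hasDerivAt_eq_slope φ φ' hmt (contφ m t hm0)
      (fun x hx => hd1 x (lt_trans hm0 hx.1))
    have hA' : H * φ' m ≤ φ t - φ m := by
      have hmem1 : m ∈ Ioi (0:ℝ) := hm0
      have hmem2 : ξ₂ ∈ Ioi (0:ℝ) := lt_trans hm0 hξ₂.1
      have h1 : φ' m ≤ φ' ξ₂ := (hmono hmem1 hmem2 hξ₂.1).le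
      have hne : t - m ≠ 0 := by intro h; rw [sub_eq_zero] at h; exact ne_of_gt hmt h
      have h2 : φ t - φ m = (t - m) * φ' ξ₂ := by
        rw [hA, mul_comm, div_mul_cancel₀ _ hne]
      rw [h2, htmH]
      exact mul_le_mul_of_nonneg_left h1 hH0.le
    -- MVT on (s, m - h₀)
    obtain ⟨ξ₁, hξ₁, hB1⟩ := exists_hasDerivAt_eq_slope φ φ' p1 (contφ s (m - h₀) hs)
      (fun x hx => hd1 x (lt_trans hs hx.1))
    have hB1' : φ (m - h₀) - φ s ≤ (H - h₀) * φ' (m - h₀) := by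
      have hmem1 : ξ₁ ∈ Ioi (0:ℝ) := lt_trans hs hξ₁.1
      have hmem2 : (m - h₀) ∈ Ioi (0:ℝ) := hmh₀pos
      have h1 : φ' ξ₁ ≤ φ' (m - h₀) := (hmono hmem1 hmem2 hξ₁.2).le
      have hne : m - h₀ - s ≠ 0 := by intro h; rw [sub_eq_zero] at h; exact ne_of_gt p1 h
      have h2 : φ (m - h₀) - φ s = (m - h₀ - s) * φ' ξ₁ := by
        rw [hB1, mul_comm, div_mul_cancel₀ _ hne]
      have h3 : m - h₀ - s = H - h₀ := by rw [← hmH]; ring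
      rw [h2, h3]
      have h4 : 0 ≤ H - h₀ := by linarith
      exact mul_le_mul_of_nonneg_left h1 h4
    -- MVT on (m - h₀, m)
    obtain ⟨ξ₀, hξ₀, hB2⟩ := exists_hasDerivAt_eq_slope φ φ' p2 (contφ (m - h₀) m hmh₀pos)
      (fun x hx => hd1 x (lt_trans hmh₀pos hx.1))
    have hB2' : φ m - φ (m - h₀) ≤ h₀ * φ' m := by
      have hmem1 : ξ₀ ∈ Ioi (0:ℝ) := lt_trans hmh₀pos hξ₀.1
      have hmem2 : m ∈ Ioi (0:ℝ) := hm0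
      have h1 : φ' ξ₀ ≤ φ' m := (hmono hmem1 hmem2 hξ₀.2).le
      have h2 : φ m - φ (m - h₀) = h₀ * φ' ξ₀ := by
        have hdd : m - (m - h₀) = h₀ := by ring
        rw [hB2, hdd, mul_comm, div_mul_cancel₀ _ (ne_of_gt hh₀0)]
      rw [h2]
      exact mul_le_mul_of_nonneg_left h1 hh₀0.le
    -- MVT for φ' on (m - h₀, m)
    obtain ⟨ξ, hξ, hC⟩ := exists_hasDerivAt_eq_slope φ' φ'' p2 (contφ' (m - h₀) m hmh₀pos)
      (fun x hx => hd2 x (lt_trans hmh₀pos hx.1))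
    have hξ0 : 0 < ξ := lt_trans hmh₀pos hξ.1
    have hξm : ξ < m := hξ.2
    have hξhalf : m / 2 ≤ ξ := by linarith [hξ.1]
    -- curvature lower bound
    have hφm0 : 0 < φ m := hpos m hm0
    have hφξ0 : 0 < φ ξ := hpos ξ hξ0
    have hφξ : φ m ≤ P * β * φ ξ := by
      have h1 := hdec ξ m hξ0 hξm.le
      have hmpp : (0:ℝ) < m ^ pp := Real.rpow_pos_of_pos hm0 pp
      have hξpp : (0:ℝ) < ξ ^ pp := Real.rpow_pos_of_pos hξ0 pp
      have h2 : m ^ pp ≤ P * ξ ^ pp := by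
        have hle : m ≤ 2 * ξ := by linarith
        calc m ^ pp ≤ (2 * ξ) ^ pp :=
              Real.rpow_le_rpow hm0.le hle (by linarith)
          _ = P * ξ ^ pp := by
              rw [hPdef, Real.mul_rpow (by norm_num) hξ0.le]
      have h3 : φ m * ξ ^ pp ≤ β * φ ξ * m ^ pp := by
        rw [← mul_div_assoc] at h1
        rw [div_le_div_iff₀ hmpp hξpp] at h1
        exact h1
      have h4 : φ m * ξ ^ pp ≤ P * β * φ ξ * ξ ^ pp := by
        calc φ m * ξ ^ pp ≤ β * φ ξ * m ^ pp := h3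
          _ ≤ β * φ ξ * (P * ξ ^ pp) :=
              mul_le_mul_of_nonneg_left h2 (mul_pos hβ0 hφξ0).le
          _ = P * β * φ ξ * ξ ^ pp := by ring
      exact le_of_mul_le_mul_right h4 hξpp
    set c : ℝ := c₇ * φ m / (P * β * m ^ 2) with hcdef
    have hPβm : (0:ℝ) < P * β * m ^ 2 := mul_pos (mul_pos hP hβ0) (pow_pos hm0 2)
    have hc0 : 0 < c := by
      rw [hcdef]
      exact div_pos (mul_pos hc₇ hφm0) hPβm
    have hcurv : c ≤ φ'' ξ := by
      have h4 := hsec ξ hξ0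
      have hξ2pos : (0:ℝ) < ξ ^ 2 := by positivity
      have h4' : c₇ * φ ξ ≤ φ'' ξ * ξ ^ 2 := by
        rw [mul_div_assoc'] at h4
        rw [div_le_iff₀ hξ2pos] at h4
        exact h4
      have hφ''pos : 0 ≤ φ'' ξ := by
        rcases le_or_gt 0 (φ'' ξ) with h | h
        · exact h
        · exfalso
          have h5 : φ'' ξ * ξ ^ 2 < 0 := mul_neg_of_neg_of_pos h hξ2pos
          linarith [mul_pos hc₇ hφξ0]
      have hξ2 : ξ ^ 2 ≤ m ^ 2 := pow_le_pow_left₀ hξ0.le hξm.le 2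
      rw [hcdef, div_le_iff₀ hPβm]
      calc c₇ * φ m ≤ c₇ * (P * β * φ ξ) := mul_le_mul_of_nonneg_left hφξ hc₇.le
        _ = P * β * (c₇ * φ ξ) := by ring
        _ ≤ P * β * (φ'' ξ * ξ ^ 2) :=
            mul_le_mul_of_nonneg_left h4' (mul_pos hP hβ0).le
        _ ≤ P * β * (φ'' ξ * m ^ 2) :=
            mul_le_mul_of_nonneg_left (mul_le_mul_of_nonneg_left hξ2 hφ''pos)
              (mul_pos hP hβ0).le
        _ = φ'' ξ * (P * β * m ^ 2) := by ring
    clear_value c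
    have hC' : h₀ * c ≤ φ' m - φ' (m - h₀) := by
      have hdd : m - (m - h₀) = h₀ := by ring
      rw [hdd] at hC
      have h2 : φ' m - φ' (m - h₀) = h₀ * φ'' ξ := by
        rw [hC, mul_comm, div_mul_cancel₀ _ (ne_of_gt hh₀0)]
      rw [h2]
      exact mul_le_mul_of_nonneg_left hcurv hh₀0.le
    -- assemble the gap estimate
    have e1 : ε' * m / 4 ≤ H - h₀ := by linarith
    have e2 : ε' * m / 4 ≤ h₀ := hh₀low
    have e0 : (0:ℝ) ≤ ε' * m / 4 :=
      (div_pos (mul_pos hε'0 hm0) (by norm_num)).le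
    have hm2 : (ε' * m / 4) * (ε' * m / 4) ≤ (H - h₀) * h₀ :=
      mul_le_mul e1 e2 e0 (by linarith)
    have step3 : (ε' * m / 4) * (ε' * m / 4) * c ≤ (H - h₀) * (h₀ * c) := by
      calc (ε' * m / 4) * (ε' * m / 4) * c ≤ (H - h₀) * h₀ * c :=
            mul_le_mul_of_nonneg_right hm2 hc0.le
        _ = (H - h₀) * (h₀ * c) := mul_assoc _ _ _
    have step1 : (H - h₀) * (h₀ * c) ≤ (H - h₀) * (φ' m - φ' (m - h₀)) :=
      mul_le_mul_of_nonneg_left hC' (by linarith)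
    have key_eq : (ε' * m / 4) * (ε' * m / 4) * c = 4 * δ₀ * φ m := by
      have hmne : m ≠ 0 := ne_of_gt hm0
      have hPne : P ≠ 0 := ne_of_gt hP
      have hβne : β ≠ 0 := ne_of_gt hβ0
      rw [hcdef, hδ₀def]
      field_simp
      ring
    have hgap : 4 * δ₀ * φ m ≤ φ s + φ t - 2 * φ m := by
      have step2 : (H - h₀) * (φ' m - φ' (m - h₀)) ≤ φ s + φ t - 2 * φ m := by
        have ident : (H - h₀) * (φ' m - φ' (m - h₀)) =
            H * φ' m - ((H - h₀) * φ' (m - h₀) + h₀ * φ' m) := by ring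
        rw [ident]
        linarith [hA', hB1', hB2']
      linarith [step3, step1, step2, key_eq]
    -- conclude
    have hS : 0 < φ s + φ t := add_pos (hpos s hs) (hpos t ht)
    have hδ1 : min δ₀ (1/2) ≤ δ₀ := min_le_left _ _
    have hδ2 : min δ₀ (1/2) ≤ 1/2 := min_le_right _ _
    rcases le_or_gt (φ m) ((φ s + φ t) / 4) with hcase | hcase
    · have h8 : min δ₀ (1/2) * (φ s + φ t) ≤ (1/2) * (φ s + φ t) :=
        mul_le_mul_of_nonneg_right hδ2 hS.le
      linarith
    · have h6 : δ₀ * (φ s + φ t) ≤ 4 * δ₀ * φ m := by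
        have h9 : (0:ℝ) ≤ 4 * δ₀ := by linarith
        have := mul_le_mul_of_nonneg_left hcase.le h9
        linarith
      have h7 : min δ₀ (1/2) * (φ s + φ t) ≤ δ₀ * (φ s + φ t) :=
        mul_le_mul_of_nonneg_right hδ1 hS.le
      linarith [hgap]
  -- reduce general case to s < t
  intro s t hs ht hst
  rcases le_or_gt s t with h | h
  · rw [max_eq_right h, abs_of_nonpos (by linarith)] at hst
    have hst' : s < t := by linarith [mul_pos hε ht]
    exact key s t hs ht hst' (by linarith)
  · rw [max_eq_left h.le, abs_of_nonneg (by linarith)] at hst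
    have h0 := key t s ht hs h (by linarith)
    rw [add_comm t s, add_comm (φ t) (φ s)] at h0
    exact h0
end

section
/- Let φ, ψ: [0,∞) → [0,∞) both be uniformly convex in the sense that for every ε > 0 there is δ ∈ (0,1) with r((s+t)/2) ≤ (1−δ)(r(s)+r(t))/2 for r ∈ {φ, ψ} whenever s, t > 0 and |s−t| ≥ ε max{s,t}. Then the product φψ is uniformly convex in the same sense: for every ε > 0, with δ chosen to work for both φ and ψ, one has φ((s+t)/2)ψ((s+t)/2) ≤ (1−δ)² (φ(s)ψ(s) + φ(t)ψ(t))/2 whenever |s−t| ≥ ε max{s,t}, provided φ and ψ are nondecreasing. -/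
open Real Set

/-- `r` satisfies the uniform convexity inequality with parameters `ε`, `δ`. -/
def UnifConvexIneq (r : ℝ → ℝ) (ε δ : ℝ) : Prop :=
  ∀ s t : ℝ, 0 < s → 0 < t → ε * max s t ≤ |s - t| →
    r ((s + t) / 2) ≤ (1 - δ) * (r s + r t) / 2

theorem stmt_7 (φ ψ : ℝ → ℝ)
    (hφnn : ∀ t : ℝ, 0 ≤ t → 0 ≤ φ t) (hψnn : ∀ t : ℝ, 0 ≤ t → 0 ≤ ψ t)
    (hφmono : MonotoneOn φ (Set.Ici (0:ℝ))) (hψmono : MonotoneOn ψ (Set.Ici (0:ℝ)))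
    (hφuc : ∀ ε : ℝ, 0 < ε → ∃ δ ∈ Set.Ioo (0:ℝ) 1, UnifConvexIneq φ ε δ)
    (hψuc : ∀ ε : ℝ, 0 < ε → ∃ δ ∈ Set.Ioo (0:ℝ) 1, UnifConvexIneq ψ ε δ) :
    ∀ ε : ℝ, 0 < ε → ∀ δ ∈ Set.Ioo (0:ℝ) 1,
      UnifConvexIneq φ ε δ → UnifConvexIneq ψ ε δ →
      ∀ s t : ℝ, 0 < s → 0 < t → ε * max s t ≤ |s - t| →
        φ ((s + t) / 2) * ψ ((s + t) / 2) ≤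
          (1 - δ) ^ 2 * (φ s * ψ s + φ t * ψ t) / 2 := by
  intro ε hε δ hδ hφ hψ s t hs ht hst
  have hs' : (0:ℝ) ≤ s := hs.le
  have ht' : (0:ℝ) ≤ t := ht.le
  have hm : (0:ℝ) ≤ (s + t) / 2 := by linarith
  have h1 := hφ s t hs ht hst
  have h2 := hψ s t hs ht hst
  have hφm := hφnn _ hm
  have hψm := hψnn _ hm
  have hφs := hφnn s hs'
  have hφt := hφnn t ht'
  have hψs := hψnn s hs'
  have hψt := hψnn t ht'
  have hδ1 : (0:ℝ) ≤ 1 - δ := by linarith [hδ.2]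
  have hkey : (φ s - φ t) * (ψ s - ψ t) ≥ 0 := by
    rcases le_total s t with h | h
    · have h1 := hφmono hs' ht' h
      have h2 := hψmono hs' ht' h
      nlinarith
    · have h1 := hφmono ht' hs' h
      have h2 := hψmono ht' hs' h
      nlinarith
  have hprod : φ ((s + t) / 2) * ψ ((s + t) / 2) ≤
      ((1 - δ) * (φ s + φ t) / 2) * ((1 - δ) * (ψ s + ψ t) / 2) :=
    mul_le_mul h1 h2 hψm (by positivity)
  nlinarith [sq_nonneg (1 - δ)]
end

section
/- Let φ: (0,∞) → (0,∞) be twice continuously differentiable and satisfy φ''(z) ≥ c₇ z⁻² φ(z) for all z > 0 (c₇ > 0). Let ψ: (0,∞) → [0,∞) be nonnegative, nondecreasing, twice continuously differentiable, and satisfy ψ''(z) ≥ −c₉ z⁻¹ ψ'(z) − c₁₀ z⁻² ψ(z) with constants c₉ < 2 and c₁₀ < c₇. Then the product satisfies (ψφ)''(z) ≥ (c₇ − c₁₀) z⁻² ψ(z) φ(z) for all z > 0. (Key step: the auxiliary function κ(z) := 2zφ'(z) − c₉φ(z) is nonnegative since κ(0)=0 and κ'(z) = 2zφ''(z) + (2−c₉)φ'(z)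 ≥ 0, where φ' ≥ 0.) -/
open Set Filter Topology

/-!
Multiplying by `z²`, the two second-order inequalities and the Leibniz rule give
`z² (ψφ)'' ≥ (c₇ - c₁₀) ψ φ + z ψ' κ` with `κ z = 2 z φ' z - c₉ φ z`, so it suffices that
`ψ' ≥ 0` (`ψ` is nondecreasing) and `κ ≥ 0`. The latter holds because `κ → 0` at `0⁺` and
`κ' = (2 - c₉) φ' + 2 z φ'' ≥ 0`, the hypothesis on `φ''` forcing `φ'' > 0`.
-/

lemma MonotoneOn.le_of_tendsto_nhdsGT {α β : Type*} [LinearOrder α] [TopologicalSpace α]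
    [OrderTopology α] [DenselyOrdered α] [Preorder β] [TopologicalSpace β] [OrderClosedTopology β]
    {f : α → β} {a z : α} {l : β} (hf : MonotoneOn f (Ioi a))
    (hlim : Tendsto f (𝓝[>] a) (𝓝 l)) (hz : a < z) : l ≤ f z := by
  have := nhdsGT_neBot_of_exists_gt ⟨z, hz⟩
  refine le_of_tendsto hlim ?_
  filter_upwards [Ioo_mem_nhdsGT hz] with w hw
  exact hf hw.1 hz hw.2.le

lemma HasDerivAt.nonneg_of_monotoneOn_Ioi {f : ℝ → ℝ} {f' a z : ℝ}
    (hd : HasDerivAt f f' z) (hf : MonotoneOn f (Ioi a)) (hz : a < z) : 0 ≤ f' :=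
  hd.hasDerivWithinAt.nonneg_of_monotoneOn (isOpen_Ioi.preperfect z hz) hf

lemma monotoneOn_Ioi_two_mul_mul_deriv_sub {φ φ' φ'' : ℝ → ℝ} {c : ℝ} (hc : c ≤ 2)
    (hφd1 : ∀ z, 0 < z → HasDerivAt φ (φ' z) z)
    (hφd2 : ∀ z, 0 < z → HasDerivAt φ' (φ'' z) z)
    (hφ' : ∀ z, 0 < z → 0 ≤ φ' z) (hφ'' : ∀ z, 0 < z → 0 ≤ φ'' z) :
    MonotoneOn (fun z => 2 * z * φ' z - c * φ z) (Ioi 0) := by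
  have hderiv : ∀ z ∈ Ioi (0 : ℝ),
      HasDerivAt (fun z => 2 * z * φ' z - c * φ z) ((2 - c) * φ' z + 2 * z * φ'' z) z :=
    fun z hz => ((((hasDerivAt_id' z).const_mul 2).mul (hφd2 z hz)).sub
      ((hφd1 z hz).const_mul c)).congr_deriv (by ring)
  refine monotoneOn_of_hasDerivWithinAt_nonneg (f' := fun z => (2 - c) * φ' z + 2 * z * φ'' z)
    (convex_Ioi 0) (fun z hz => (hderiv z hz).continuousAt.continuousWithinAt) ?_ ?_ <;>
    rw [interior_Ioi]
  · exact fun z hz => (hderiv z hz).hasDerivWithinAt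
  · intro z (hz : 0 < z)
    have := hφ' z hz
    have := hφ'' z hz
    have : (0 : ℝ) ≤ 2 - c := by linarith
    positivity

lemma le_mul_second_deriv_of_le {z a a' a'' b b' b'' c₇ c₉ c₁₀ : ℝ} (hz : 0 < z)
    (ha : 0 ≤ a) (ha' : 0 ≤ a') (hb : 0 ≤ b) (hκ : 0 ≤ 2 * z * b' - c₉ * b)
    (ha'' : -(c₉ * (a' / z)) - c₁₀ * (a / z ^ 2) ≤ a'')
    (hb'' : c₇ * (b / z ^ 2) ≤ b'') :
    (c₇ - c₁₀) * (a * b / z ^ 2) ≤ a'' * b + 2 * a' * b' + a * b'' := by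
  have hz2 : 0 < z ^ 2 := by positivity
  have ha''z : -(c₉ * a') * z - c₁₀ * a ≤ a'' * z ^ 2 := by
    have := mul_le_mul_of_nonneg_right ha'' hz2.le
    field_simp at this
    linarith
  have hb''z : c₇ * b ≤ b'' * z ^ 2 := by
    have := mul_le_mul_of_nonneg_right hb'' hz2.le
    field_simp at this
    linarith
  rw [mul_div_assoc', div_le_iff₀ hz2]
  nlinarith [mul_le_mul_of_nonneg_right ha''z hb, mul_le_mul_of_nonneg_right hb''z ha,
    mul_nonneg (mul_nonneg ha' hκ) hz.le]

theorem stmt_16_general (φ φ' φ'' ψ ψ' ψ'' : ℝ → ℝ) (c₇ c₉ c₁₀ : ℝ)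
    (hc₇ : 0 < c₇) (hc₉ : c₉ < 2)
    (hφpos : ∀ z : ℝ, 0 < z → 0 < φ z)
    (hφd1 : ∀ z : ℝ, 0 < z → HasDerivAt φ (φ' z) z)
    (hφd2 : ∀ z : ℝ, 0 < z → HasDerivAt φ' (φ'' z) z)
    (hφ'nn : ∀ z : ℝ, 0 < z → 0 ≤ φ' z)
    -- κ(z) := 2zφ'(z) − c₉φ(z) tends to 0 as z → 0⁺ (κ(0) = 0)
    (hκ0 : Filter.Tendsto (fun z => 2 * z * φ' z - c₉ * φ z)
      (nhdsWithin 0 (Set.Ioi 0)) (nhds 0))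
    (hφsec : ∀ z : ℝ, 0 < z → c₇ * (φ z / z ^ 2) ≤ φ'' z)
    (hψnn : ∀ z : ℝ, 0 < z → 0 ≤ ψ z)
    (hψmono : MonotoneOn ψ (Set.Ioi (0:ℝ)))
    (hψd1 : ∀ z : ℝ, 0 < z → HasDerivAt ψ (ψ' z) z)
    (hψsec : ∀ z : ℝ, 0 < z → -(c₉ * (ψ' z / z)) - c₁₀ * (ψ z / z ^ 2) ≤ ψ'' z) :
    ∀ z : ℝ, 0 < z →
      (c₇ - c₁₀) * (ψ z * φ z / z ^ 2) ≤
        ψ'' z * φ z + 2 * ψ' z * φ' z + ψ z * φ'' z := by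
  intro z hz
  have hφ''nn : ∀ z : ℝ, 0 < z → 0 ≤ φ'' z := fun z hz =>
    (by have := hφpos z hz; positivity : 0 ≤ c₇ * (φ z / z ^ 2)).trans (hφsec z hz)
  have hκ : 0 ≤ 2 * z * φ' z - c₉ * φ z :=
    (monotoneOn_Ioi_two_mul_mul_deriv_sub hc₉.le hφd1 hφd2 hφ'nn hφ''nn).le_of_tendsto_nhdsGT
      hκ0 hz
  exact le_mul_second_deriv_of_le hz (hψnn z hz) ((hψd1 z hz).nonneg_of_monotoneOn_Ioi hψmono hz)
    (hφpos z hz).le hκ (hψsec z hz) (hφsec z hz)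

theorem stmt_16 (φ φ' φ'' ψ ψ' ψ'' : ℝ → ℝ) (c₇ c₉ c₁₀ : ℝ)
    (hc₇ : 0 < c₇) (hc₉ : c₉ < 2) (hc₁₀ : c₁₀ < c₇)
    (hφpos : ∀ z : ℝ, 0 < z → 0 < φ z)
    (hφd1 : ∀ z : ℝ, 0 < z → HasDerivAt φ (φ' z) z)
    (hφd2 : ∀ z : ℝ, 0 < z → HasDerivAt φ' (φ'' z) z)
    (hφ'nn : ∀ z : ℝ, 0 < z → 0 ≤ φ' z)
    -- κ(z) := 2zφ'(z) − c₉φ(z) tends to 0 as z → 0⁺ (κ(0) = 0)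
    (hκ0 : Filter.Tendsto (fun z => 2 * z * φ' z - c₉ * φ z)
      (nhdsWithin 0 (Set.Ioi 0)) (nhds 0))
    (hφsec : ∀ z : ℝ, 0 < z → c₇ * (φ z / z ^ 2) ≤ φ'' z)
    (hψnn : ∀ z : ℝ, 0 < z → 0 ≤ ψ z)
    (hψmono : MonotoneOn ψ (Set.Ioi (0:ℝ)))
    (hψd1 : ∀ z : ℝ, 0 < z → HasDerivAt ψ (ψ' z) z)
    (hψd2 : ∀ z : ℝ, 0 < z → HasDerivAt ψ' (ψ'' z) z)
    (hψsec : ∀ z : ℝ, 0 < z → -(c₉ * (ψ' z / z)) - c₁₀ * (ψ z / z ^ 2) ≤ ψ'' z) :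
    ∀ z : ℝ, 0 < z →
      (c₇ - c₁₀) * (ψ z * φ z / z ^ 2) ≤
        ψ'' z * φ z + 2 * ψ' z * φ' z + ψ z * φ'' z :=
  stmt_16_general φ φ' φ'' ψ ψ' ψ'' c₇ c₉ c₁₀ hc₇ hc₉ hφpos hφd1 hφd2 hφ'nn hκ0 hφsec hψnn hψmono
    hψd1 hψsec
end
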